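/- arXiv:2407.17394 — 5 statements merged into one kernel-verified Lean document; each statement's English description precedes it below -/
import Mathlib

section
/- Let σ : [0,1] → X_free ⊆ ℝ^d be a continuous path with clearance 2α (meaning the closed ball of radius 2α around σ(t) is contained in X_free for all t). If N ⊆ X_free is an α-net of X_free, then there exists a finite sequence of points x₀ = σ(0), x₁, …, x_{m−1}, x_m = σ(1) with each intermediate x_i ∈ N, such that consecutive points are at distance at most 4α and each straight-line segment between consecutive points lies entirely in X_free. -/
/-!
Sample the path at the times `i / n`, with `n` so large (uniform continuity on `[0,1]`) that
consecutive samples are less than `α` apart, and replace each interior sample by a net point at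
distance at most `α`. Two consecutive waypoints then both lie in the ball of radius `2α` around
the earlier sample, which is contained in `X_free` by clearance; that ball is convex, so it
contains the segment between them.
-/

open Metric Set

lemma ContinuousOn.exists_dist_sample_lt {X : Type*} [PseudoMetricSpace X] {σ : ℝ → X}
    (hσ : ContinuousOn σ (Icc 0 1)) {ε : ℝ} (hε : 0 < ε) :
    ∃ n : ℕ, 0 < n ∧ ∀ i < n, dist (σ (i / n)) (σ (↑(i + 1) / n)) < ε := by
  obtain ⟨δ, hδ, hσδ⟩ :=
    Metric.uniformContinuousOn_iff.mp (isCompact_Icc.uniformContinuousOn_of_continuous hσ) ε hε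
  obtain ⟨n, hn⟩ := exists_nat_gt (1 / δ)
  have hnR : (0 : ℝ) < n := (one_div_pos.mpr hδ).trans hn
  refine ⟨n, Nat.cast_pos.mp hnR, fun i hi => hσδ _ ?_ _ ?_ ?_⟩
  · exact unitInterval.div_mem i.cast_nonneg hnR.le (by exact_mod_cast hi.le)
  · exact unitInterval.div_mem (i + 1).cast_nonneg hnR.le (by exact_mod_cast hi)
  · rw [Real.dist_eq, Nat.cast_succ, ← sub_div, sub_add_cancel_left, abs_div, abs_neg,
      abs_one, abs_of_pos hnR, div_lt_iff₀ hnR]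
    rwa [div_lt_iff₀ hδ, mul_comm] at hn

lemma dist_le_and_segment_subset_of_dist_le {E : Type*} [NormedAddCommGroup E]
    [NormedSpace ℝ E] {S : Set E} {a b x y : E} {r : ℝ} (hab : dist a b ≤ r)
    (hx : dist x a ≤ r) (hy : dist y b ≤ r) (hS : closedBall a (2 * r) ⊆ S) :
    dist x y ≤ 3 * r ∧ segment ℝ x y ⊆ S := by
  have hya : dist y a ≤ 2 * r := by
    linarith [dist_triangle y b a, dist_comm a b]
  have hxa : dist x a ≤ 2 * r := by linarith [dist_nonneg (x := a) (y := b)]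
  refine ⟨by linarith [dist_triangle x a y, dist_comm a y], ?_⟩
  exact ((convex_closedBall a (2 * r)).segment_subset hxa hya).trans hS

theorem stmt3_general {d : ℕ} (Xfree N : Set (EuclideanSpace ℝ (Fin d))) (α : ℝ) (hα : 0 < α)
    (σ : ℝ → EuclideanSpace ℝ (Fin d))
    (hσcont : ContinuousOn σ (Set.Icc 0 1))
    (hclear : ∀ t ∈ Set.Icc (0 : ℝ) 1, Metric.closedBall (σ t) (2 * α) ⊆ Xfree)
    (hnet : ∀ x ∈ Xfree, ∃ p ∈ N, dist x p ≤ α) :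
    ∃ (m : ℕ) (x : ℕ → EuclideanSpace ℝ (Fin d)),
      x 0 = σ 0 ∧ x m = σ 1 ∧
      (∀ i, 0 < i → i < m → x i ∈ N) ∧
      (∀ i < m, dist (x i) (x (i + 1)) ≤ 4 * α ∧
        segment ℝ (x i) (x (i + 1)) ⊆ Xfree) := by
  obtain ⟨n, hn, hsample⟩ := hσcont.exists_dist_sample_lt hα
  choose! p hpN hpdist using hnet
  have htime : ∀ i ≤ n, (i / n : ℝ) ∈ Icc 0 1 := fun i hi =>
    unitInterval.div_mem i.cast_nonneg n.cast_nonneg (by exact_mod_cast hi)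
  have hσX : ∀ i ≤ n, σ (i / n) ∈ Xfree := fun i hi =>
    hclear _ (htime i hi) (mem_closedBall_self (by positivity))
  let x : ℕ → EuclideanSpace ℝ (Fin d) := fun i =>
    if i = 0 ∨ i = n then σ (i / n) else p (σ (i / n))
  have hx : ∀ i ≤ n, dist (x i) (σ (i / n)) ≤ α := by
    intro i hi
    by_cases hend : i = 0 ∨ i = n
    · simp only [x, if_pos hend, dist_self, hα.le]
    · simpa only [x, if_neg hend, dist_comm] using hpdist _ (hσX i hi)
  refine ⟨n, x, by simp [x], by simp [x, hn.ne'], fun i hi0 hin => ?_, fun i hin => ?_⟩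
  · simpa [x, hi0.ne', hin.ne] using hpN _ (hσX i hin.le)
  · obtain ⟨hdist, hseg⟩ := dist_le_and_segment_subset_of_dist_le (hsample i hin).le
      (hx i hin.le) (hx (i + 1) hin) (hclear _ (htime i hin.le))
    exact ⟨hdist.trans (by linarith), hseg⟩

/-- If `σ : [0,1] → X_free` is a continuous path with clearance `2α` and `N ⊆ X_free` is
an `α`-net of `X_free`, then there is a finite sequence of waypoints starting at `σ 0`
and ending at `σ 1`, with all intermediate waypoints in `N`, such that consecutive
waypoints are at distance at most `4α` and each connecting segment lies in `X_free`. -/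
theorem stmt3 {d : ℕ} (Xfree N : Set (EuclideanSpace ℝ (Fin d))) (α : ℝ) (hα : 0 < α)
    (σ : ℝ → EuclideanSpace ℝ (Fin d))
    (hσcont : ContinuousOn σ (Set.Icc 0 1))
    (hclear : ∀ t ∈ Set.Icc (0 : ℝ) 1, Metric.closedBall (σ t) (2 * α) ⊆ Xfree)
    (hNX : N ⊆ Xfree)
    (hnet : ∀ x ∈ Xfree, ∃ p ∈ N, dist x p ≤ α) :
    ∃ (m : ℕ) (x : ℕ → EuclideanSpace ℝ (Fin d)),
      x 0 = σ 0 ∧ x m = σ 1 ∧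
      (∀ i, 0 < i → i < m → x i ∈ N) ∧
      (∀ i < m, dist (x i) (x (i + 1)) ≤ 4 * α ∧
        segment ℝ (x i) (x (i + 1)) ⊆ Xfree) :=
  stmt3_general Xfree N α hα σ hσcont hclear hnet
end

section
/- If X is a binomial random variable with n trials and success probability p, and p + t ≤ 1 with t > 0, then ℙ(X ≥ (p+t)n) ≤ exp(−n·D_KL(p+t ∥ p)), where D_KL(a ∥ b) = a·log(a/b) + (1−a)·log((1−a)/(1−b)) is the Kullback–Leibler divergence between Bernoulli distributions. -/
/-!
Chernoff's method: for every `s ≥ 0` the indicator of `{k ≥ a}` is at most `exp (s (k - a))`,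
so the upper tail is at most `exp (-s a)` times the moment generating function
`(p eˢ + 1 - p)ⁿ` of the binomial law. The choice `eˢ = q(1 - p) / (p(1 - q))`, with
`q = p + t`, makes the exponent exactly `-n D_KL(q ∥ p)`. When `q = 1` this choice is
unavailable, but then the tail is the single term `pⁿ = exp (n log p)`.
-/

/-- Kullback–Leibler divergence between Bernoulli distributions with parameters `a, b`. -/
noncomputable def klBernoulli (a b : ℝ) : ℝ :=
  a * Real.log (a / b) + (1 - a) * Real.log ((1 - a) / (1 - b))

open Finset Real

theorem binomial_sum_mul_exp (n : ℕ) (p s : ℝ) :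
    ∑ k ∈ range (n + 1), (n.choose k : ℝ) * p ^ k * (1 - p) ^ (n - k) * exp (s * k) =
      (p * exp s + (1 - p)) ^ n := by
  rw [add_pow]
  refine sum_congr rfl fun k _ => ?_
  rw [mul_comm s, exp_nat_mul, mul_pow]
  ring

theorem binomial_upper_tail_le_exp_mul_mgf (n : ℕ) {p s : ℝ} (a : ℝ) (hp0 : 0 ≤ p)
    (hp1 : p ≤ 1) (hs : 0 ≤ s) :
    ∑ k ∈ (range (n + 1)).filter (fun k : ℕ => a ≤ (k : ℝ)),
        (n.choose k : ℝ) * p ^ k * (1 - p) ^ (n - k) ≤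
      exp (-s * a) * (p * exp s + (1 - p)) ^ n := by
  have h1p : 0 ≤ 1 - p := by linarith
  calc ∑ k ∈ (range (n + 1)).filter (fun k : ℕ => a ≤ (k : ℝ)),
          (n.choose k : ℝ) * p ^ k * (1 - p) ^ (n - k)
      ≤ ∑ k ∈ (range (n + 1)).filter (fun k : ℕ => a ≤ (k : ℝ)),
          (n.choose k : ℝ) * p ^ k * (1 - p) ^ (n - k) * exp (s * (k - a)) := by
        refine sum_le_sum fun k hk => le_mul_of_one_le_right (by positivity) ?_
        exact one_le_exp (mul_nonneg hs (sub_nonneg.mpr (mem_filter.mp hk).2))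
    _ ≤ ∑ k ∈ range (n + 1),
          (n.choose k : ℝ) * p ^ k * (1 - p) ^ (n - k) * exp (s * (k - a)) :=
        sum_le_sum_of_subset_of_nonneg (filter_subset _ _) fun _ _ _ => by positivity
    _ = exp (-s * a) * (p * exp s + (1 - p)) ^ n := by
        rw [← binomial_sum_mul_exp, mul_sum]
        refine sum_congr rfl fun k _ => ?_
        rw [show s * (k - a) = -s * a + s * k by ring, exp_add]
        ring

theorem klBernoulli_eq_mul_log_sub_log {p q : ℝ} (hp0 : 0 < p) (hp1 : p < 1) (hq0 : 0 < q)
    (hq1 : q < 1) :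
    klBernoulli q p =
      q * log (q * (1 - p) / (p * (1 - q))) - log ((1 - p) / (1 - q)) := by
  have h1p : 1 - p ≠ 0 := by linarith
  have h1q : 1 - q ≠ 0 := by linarith
  rw [klBernoulli, log_div (mul_ne_zero hq0.ne' h1p) (mul_ne_zero hp0.ne' h1q),
    log_mul hq0.ne' h1p, log_mul hp0.ne' h1q, log_div hq0.ne' hp0.ne', log_div h1q h1p, log_div h1p h1q]
  ring

theorem binomial_upper_tail_le_exp_neg_klBernoulli {p q : ℝ} (n : ℕ) (hp0 : 0 < p)
    (hpq : p ≤ q) (hq1 : q < 1) :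
    ∑ k ∈ (range (n + 1)).filter (fun k : ℕ => q * n ≤ (k : ℝ)),
        (n.choose k : ℝ) * p ^ k * (1 - p) ^ (n - k) ≤
      exp (-(n : ℝ) * klBernoulli q p) := by
  have hp1 : p < 1 := hpq.trans_lt hq1
  have hq0 : 0 < q := hp0.trans_le hpq
  have h1p : 0 < 1 - p := by linarith
  have h1q : 0 < 1 - q := by linarith
  have hr : 1 ≤ q * (1 - p) / (p * (1 - q)) := by
    rw [le_div_iff₀ (by positivity)]
    nlinarith
  have hmgf : p * exp (log (q * (1 - p) / (p * (1 - q)))) + (1 - p) =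
      exp (log ((1 - p) / (1 - q))) := by
    rw [exp_log (by positivity), exp_log (by positivity)]
    field_simp
    ring
  refine (binomial_upper_tail_le_exp_mul_mgf n _ hp0.le hp1.le (log_nonneg hr)).trans_eq ?_
  rw [hmgf, ← exp_nat_mul, ← exp_add, klBernoulli_eq_mul_log_sub_log hp0 hp1 hq0 hq1]
  congr 1
  ring

theorem binomial_upper_tail_at_one (n : ℕ) {p : ℝ} (hp0 : 0 < p) :
    ∑ k ∈ (range (n + 1)).filter (fun k : ℕ => (n : ℝ) ≤ k),
        (n.choose k : ℝ) * p ^ k * (1 - p) ^ (n - k) =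
      exp (-(n : ℝ) * klBernoulli 1 p) := by
  have hfilter : (range (n + 1)).filter (fun k : ℕ => (n : ℝ) ≤ k) = {n} := by
    ext k
    simp only [mem_filter, mem_range, mem_singleton, Nat.cast_le]
    omega
  have hkl : klBernoulli 1 p = -log p := by
    simp [klBernoulli, log_inv]
  rw [hfilter, sum_singleton, hkl, neg_mul_neg, exp_nat_mul, exp_log hp0]
  simp

theorem stmt7_general (n : ℕ) (p t : ℝ) (hp0 : 0 < p) (ht : 0 < t)
    (hpt : p + t ≤ 1) :
    ∑ k ∈ (Finset.range (n + 1)).filter (fun (k : ℕ) => (p + t) * n ≤ (k : ℝ)),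
        (n.choose k : ℝ) * p ^ k * (1 - p) ^ (n - k) ≤
      Real.exp (-(n : ℝ) * klBernoulli (p + t) p) := by
  rcases hpt.lt_or_eq with hq1 | hq1
  · exact binomial_upper_tail_le_exp_neg_klBernoulli n hp0 (by linarith) hq1
  · rw [hq1, one_mul]
    exact (binomial_upper_tail_at_one n hp0).le

/-- Chernoff bound for the binomial distribution: if `X ~ Binomial(n, p)` and
`t > 0` with `p + t ≤ 1`, then `ℙ(X ≥ (p+t)·n) ≤ exp(−n·D_KL(p+t ∥ p))`. -/
theorem stmt7 (n : ℕ) (p t : ℝ) (hp0 : 0 < p) (hp1 : p < 1) (ht : 0 < t)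
    (hpt : p + t ≤ 1) :
    ∑ k ∈ (Finset.range (n + 1)).filter (fun (k : ℕ) => (p + t) * n ≤ (k : ℝ)),
        (n.choose k : ℝ) * p ^ k * (1 - p) ^ (n - k) ≤
      Real.exp (-(n : ℝ) * klBernoulli (p + t) p) :=
  stmt7_general n p t hp0 ht hpt
end

section
/- For Bernoulli parameters 0 < p₂ < p₁ < 1, the Kullback–Leibler divergence satisfies D_KL(p₁ ∥ p₂) ≥ (p₁ − p₂)² / (2 p₁). -/
open Real

/-- For `0 < x ≤ 1`, `log x ≤ (x - 1) - (x - 1)^2 / 2`. -/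
lemma aux_log_quad {x : ℝ} (hx : 0 < x) (hx1 : x ≤ 1) :
    Real.log x ≤ (x - 1) - (x - 1) ^ 2 / 2 := by
  set g : ℝ → ℝ := fun t => Real.log t - (t - 1) + (t - 1) ^ 2 / 2 with hg
  have hderiv : ∀ t : ℝ, 0 < t → HasDerivAt g (t⁻¹ - 1 + (t - 1)) t := by
    intro t htpos
    have h1 : HasDerivAt (fun s : ℝ => Real.log s) t⁻¹ t := Real.hasDerivAt_log htpos.ne'
    have h2 : HasDerivAt (fun s : ℝ => s - 1) 1 t := (hasDerivAt_id t).sub_const 1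
    have h3 : HasDerivAt (fun s : ℝ => (s - 1) ^ 2 / 2) (2 * (t - 1) ^ 1 * 1 / 2) t :=
      (h2.pow 2).div_const 2
    have := (h1.sub h2).add h3
    exact this.congr_deriv (by ring)
  have hmono : MonotoneOn g (Set.Icc x 1) := by
    apply monotoneOn_of_deriv_nonneg (convex_Icc x 1)
    · intro t ht
      simp only [Set.mem_Icc] at ht
      exact (hderiv t (lt_of_lt_of_le hx ht.1)).continuousAt.continuousWithinAt
    · intro t ht
      rw [interior_Icc, Set.mem_Ioo] at ht
      exact (hderiv t (lt_trans hx ht.1)).differentiableAt.differentiableWithinAt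
    · intro t ht
      rw [interior_Icc, Set.mem_Ioo] at ht
      have htpos : 0 < t := lt_trans hx ht.1
      rw [(hderiv t htpos).deriv]
      have : t⁻¹ - 1 + (t - 1) = (t - 1) ^ 2 / t := by
        field_simp; ring
      rw [this]
      positivity
  have h := hmono (Set.left_mem_Icc.mpr hx1) (Set.right_mem_Icc.mpr hx1) hx1
  simp only [hg, Real.log_one] at h
  nlinarith [h]

/-- For Bernoulli parameters `0 < p₂ < p₁ < 1`, the Kullback–Leibler divergence
`D_KL(p₁ ∥ p₂) = p₁·log(p₁/p₂) + (1−p₁)·log((1−p₁)/(1−p₂))` satisfies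
`D_KL(p₁ ∥ p₂) ≥ (p₁ − p₂)² / (2 p₁)`. -/
theorem stmt8 (p₁ p₂ : ℝ) (h0 : 0 < p₂) (h12 : p₂ < p₁) (h1 : p₁ < 1) :
    (p₁ - p₂) ^ 2 / (2 * p₁) ≤
      p₁ * Real.log (p₁ / p₂) + (1 - p₁) * Real.log ((1 - p₁) / (1 - p₂)) := by
  have hp1 : 0 < p₁ := lt_trans h0 h12
  have h1p1 : 0 < 1 - p₁ := by linarith
  have h1p2 : 0 < 1 - p₂ := by linarith
  -- First term: log(p₁/p₂) = - log(p₂/p₁) ≥ (1 - p₂/p₁) + (1 - p₂/p₁)^2/2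
  have hx : (0:ℝ) < p₂ / p₁ := div_pos h0 hp1
  have hx1 : p₂ / p₁ ≤ 1 := le_of_lt ((div_lt_one hp1).mpr h12)
  have hlog1 : Real.log (p₂ / p₁) ≤ (p₂ / p₁ - 1) - (p₂ / p₁ - 1) ^ 2 / 2 :=
    aux_log_quad hx hx1
  have hinv : Real.log (p₁ / p₂) = - Real.log (p₂ / p₁) := by
    rw [← Real.log_inv]; congr 1; field_simp
  -- Second term: log((1-p₁)/(1-p₂)) ≥ 1 - (1-p₂)/(1-p₁)
  have hy : (0:ℝ) < (1 - p₁) / (1 - p₂) := div_pos h1p1 h1p2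
  have hlog2 : 1 - ((1 - p₁) / (1 - p₂))⁻¹ ≤ Real.log ((1 - p₁) / (1 - p₂)) :=
    Real.one_sub_inv_le_log_of_pos hy
  have hinv2 : ((1 - p₁) / (1 - p₂))⁻¹ = (1 - p₂) / (1 - p₁) := by
    rw [inv_div]
  rw [hinv2] at hlog2
  have key1 : p₁ - p₂ + (p₁ - p₂) ^ 2 / (2 * p₁) ≤ p₁ * Real.log (p₁ / p₂) := by
    rw [hinv]
    have := mul_le_mul_of_nonneg_left hlog1 (le_of_lt hp1)
    have heq : p₁ * ((p₂ / p₁ - 1) - (p₂ / p₁ - 1) ^ 2 / 2)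
        = (p₂ - p₁) - (p₁ - p₂) ^ 2 / (2 * p₁) := by
      field_simp; ring
    nlinarith [this, heq]
  have key2 : p₂ - p₁ ≤ (1 - p₁) * Real.log ((1 - p₁) / (1 - p₂)) := by
    have := mul_le_mul_of_nonneg_left hlog2 (le_of_lt h1p1)
    have heq : (1 - p₁) * (1 - (1 - p₂) / (1 - p₁)) = p₂ - p₁ := by
      field_simp
      ring
    nlinarith [this, heq]
  linarith
end

section
/- Let V be a set of n i.i.d. uniform samples from a Borel set X_free ⊆ ℝ^d of finite positive Lebesgue measure (normalized so ℙ(X_free) = 1). Fix K ≥ 1 and γ ∈ (0,1) with K > √(2K·log(n/γ)). If r > 0 satisfies r^d·ℙ(B₁^d) ≤ (K − √(2K·log(n/γ)))/(n − 1), then with probability at least 1 − γ, every point v ∈ V has fewer than K + 1 other sample points within distance r, i.e., r < min_{v ∈ V} ‖v − nn_{K+1}(v)‖. -/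
open MeasureTheory Finset
open scoped ENNReal

lemma log_one_sub {s : ℝ} (h0 : 0 ≤ s) (h1 : s < 1) :
    s + s^2/2 ≤ -Real.log (1-s) := by
  set f : ℝ → ℝ := fun x => -Real.log (1-x) - x - x^2/2 with hf
  have hderiv : ∀ x ∈ Set.Ioo (0:ℝ) s, HasDerivAt f (-((1-x)⁻¹ * (-1)) - 1 - (2*x^(2-1))/2) x := by
    intro x hx
    rcases hx with ⟨hx0, hxs⟩
    have hne : (1:ℝ) - x ≠ 0 := by nlinarith
    have h1' : HasDerivAt (fun x : ℝ => 1 - x) (-1) x := by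
      simpa using (hasDerivAt_id x).const_sub 1
    have hlog : HasDerivAt (fun x : ℝ => Real.log (1-x)) ((1-x)⁻¹ * (-1)) x :=
      (Real.hasDerivAt_log hne).comp x h1'
    exact (hlog.neg.sub (hasDerivAt_id x)).sub ((hasDerivAt_pow 2 x).div_const 2)
  have hmono : MonotoneOn f (Set.Icc 0 s) := by
    apply monotoneOn_of_deriv_nonneg (convex_Icc 0 s)
    · apply ContinuousOn.sub
      apply ContinuousOn.sub
      · exact (((continuous_const.sub continuous_id).continuousOn).log
          (fun x hx => by rcases hx with ⟨_, hx2⟩; simp; nlinarith)).neg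
      · exact continuous_id.continuousOn
      · exact (continuous_pow 2).continuousOn.div_const 2
    · intro x hx
      rw [interior_Icc] at hx
      exact (hderiv x hx).differentiableAt.differentiableWithinAt
    · intro x hx
      rw [interior_Icc] at hx
      rw [(hderiv x hx).deriv]
      rcases hx with ⟨hx0, hxs⟩
      have h1x : (0:ℝ) < 1 - x := by nlinarith
      have : 1 + x ≤ (1-x)⁻¹ := by
        rw [inv_eq_one_div, le_div_iff₀ h1x]; nlinarith
      norm_num
      nlinarith
  have h0mem : (0:ℝ) ∈ Set.Icc (0:ℝ) s := by constructor <;> linarith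
  have hsmem : s ∈ Set.Icc (0:ℝ) s := by constructor <;> linarith
  have := hmono h0mem hsmem h0
  simp only [hf] at this
  norm_num at this
  linarith

lemma binom_bound {α : Type*} [MeasurableSpace α] (μ : Measure α) [IsProbabilityMeasure μ]
    (m K : ℕ) (A : Set α) (hA : MeasurableSet A) (p ρ : ℝ) (hp : 0 ≤ p) (hρ : 1 ≤ ρ)
    (hAp : μ A ≤ ENNReal.ofReal p) :
    (Measure.pi fun _ : Fin m => μ)
      {w : Fin m → α | K ≤ ({j : Fin m | w j ∈ A}).ncard}
      ≤ ENNReal.ofReal ((1 + (ρ-1)*p)^m / ρ^K) := by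
  classical
  set P := Measure.pi fun _ : Fin m => μ with hP
  set a := μ A with ha
  set b := μ Aᶜ with hb
  set ρ' : ℝ≥0∞ := ENNReal.ofReal ρ with hρ'
  have hρ'1 : (1:ℝ≥0∞) ≤ ρ' := by
    rw [hρ', ← ENNReal.ofReal_one]; exact ENNReal.ofReal_le_ofReal hρ
  have hρ'top : ρ' ≠ ⊤ := ENNReal.ofReal_ne_top
  set box : Finset (Fin m) → Set (Fin m → α) :=
    fun S => Set.pi Set.univ (fun j => if j ∈ S then A else Aᶜ) with hbox
  set 𝒮 : Finset (Finset (Fin m)) :=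
    Finset.univ.powerset.filter (fun S : Finset (Fin m) => K ≤ S.card) with h𝒮
  have hsub : {w : Fin m → α | K ≤ ({j : Fin m | w j ∈ A}).ncard} ⊆ ⋃ S ∈ 𝒮, box S := by
    intro w hw
    simp only [Set.mem_setOf_eq] at hw
    simp only [Set.mem_iUnion]
    refine ⟨Finset.univ.filter fun j => w j ∈ A, ?_, ?_⟩
    · simp only [h𝒮, Finset.mem_filter, Finset.mem_powerset]
      refine ⟨Finset.subset_univ _, ?_⟩
      have : ({j : Fin m | w j ∈ A}).ncard = (Finset.univ.filter fun j => w j ∈ A).card := by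
        rw [← Set.ncard_coe_finset]
        congr 1
        ext j; simp
      omega
    · intro j _
      by_cases hj : w j ∈ A <;> simp [hj]
  have hsplit : ∀ (S : Finset (Fin m)) (x y : ℝ≥0∞),
      (∏ j : Fin m, (if j ∈ S then x else y)) = x ^ S.card * y ^ (Finset.univ \ S).card := by
    intro S x y
    rw [← Finset.prod_sdiff (Finset.subset_univ S), mul_comm]
    congr 1
    · rw [← Finset.prod_const]
      exact Finset.prod_congr rfl fun j hj => by simp [hj]
    · rw [← Finset.prod_const]
      exact Finset.prod_congr rfl fun j hj => by simp [(Finset.mem_sdiff.mp hj).2]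
  have hboxval : ∀ S : Finset (Fin m),
      P (box S) = a ^ S.card * b ^ (Finset.univ \ S).card := by
    intro S
    rw [hbox, hP, Measure.pi_pi, ← hsplit S a b]
    exact Finset.prod_congr rfl fun j _ => by by_cases hj : j ∈ S <;> simp [hj, ha, hb]
  have step1 : P {w : Fin m → α | K ≤ ({j : Fin m | w j ∈ A}).ncard}
      ≤ ∑ S ∈ 𝒮, a ^ S.card * b ^ (Finset.univ \ S).card := by
    refine le_trans (measure_mono hsub) (le_trans (measure_biUnion_finset_le _ _) ?_)
    exact Finset.sum_le_sum fun S _ => le_of_eq (hboxval S)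
  have step2 : ρ'^K * ∑ S ∈ 𝒮, a ^ S.card * b ^ (Finset.univ \ S).card
      ≤ ∑ S ∈ Finset.univ.powerset (α := Fin m),
          (ρ' * a) ^ S.card * b ^ (Finset.univ \ S).card := by
    rw [Finset.mul_sum]
    refine le_trans (Finset.sum_le_sum ?_)
      (Finset.sum_le_sum_of_subset (Finset.filter_subset _ _))
    intro S hS
    have hcard : K ≤ S.card := (Finset.mem_filter.mp hS).2
    calc ρ'^K * (a ^ S.card * b ^ (Finset.univ \ S).card)
        ≤ ρ'^S.card * (a ^ S.card * b ^ (Finset.univ \ S).card) :=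
          mul_le_mul_left (pow_le_pow_right₀ hρ'1 hcard) _
      _ = (ρ' * a) ^ S.card * b ^ (Finset.univ \ S).card := by rw [mul_pow]; ring
  have step3 : ∑ S ∈ Finset.univ.powerset (α := Fin m),
      (ρ' * a) ^ S.card * b ^ (Finset.univ \ S).card = (ρ' * a + b)^m := by
    have hpa := Finset.prod_add (f := fun _ : Fin m => ρ' * a) (g := fun _ : Fin m => b)
      (s := Finset.univ)
    rw [Finset.prod_const, Finset.card_univ, Fintype.card_fin] at hpa
    rw [hpa]
    exact Finset.sum_congr rfl fun S _ => by rw [Finset.prod_const, Finset.prod_const]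
  have hab : a + b = 1 := by
    rw [ha, hb, measure_add_measure_compl hA, measure_univ]
  have step4 : ρ' * a + b ≤ ENNReal.ofReal (1 + (ρ-1)*p) := by
    have hρa : ρ' * a = (ρ' - 1) * a + a := by
      nth_rewrite 1 [← tsub_add_cancel_of_le hρ'1]
      rw [add_mul, one_mul]
    have h1 : ρ' * a + b = (ρ' - 1) * a + 1 := by
      rw [hρa, add_assoc, hab]
    rw [h1]
    have h2 : ρ' - 1 = ENNReal.ofReal (ρ - 1) := by
      rw [ENNReal.ofReal_sub _ (by norm_num : (0:ℝ) ≤ 1), ENNReal.ofReal_one, hρ']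
    have h3 : (ρ' - 1) * a ≤ ENNReal.ofReal ((ρ-1)*p) := by
      rw [h2, ENNReal.ofReal_mul (by linarith)]
      exact mul_le_mul_right hAp _
    calc (ρ' - 1) * a + 1 ≤ ENNReal.ofReal ((ρ-1)*p) + ENNReal.ofReal 1 := by
          rw [ENNReal.ofReal_one]; exact add_le_add_left h3 _
      _ = ENNReal.ofReal (1 + (ρ-1)*p) := by
          rw [← ENNReal.ofReal_add (by nlinarith) (by norm_num)]; ring_nf
  have step5 : (ρ' * a + b)^m ≤ ENNReal.ofReal ((1 + (ρ-1)*p)^m) := by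
    rw [ENNReal.ofReal_pow (by nlinarith)]
    exact pow_le_pow_left' step4 m
  have hρK : ρ'^K ≠ 0 := by
    refine pow_ne_zero _ ?_
    intro h; rw [h] at hρ'1; simp at hρ'1
  have hρKtop : ρ'^K ≠ ⊤ := by
    exact ENNReal.pow_ne_top hρ'top
  have final : P {w : Fin m → α | K ≤ ({j : Fin m | w j ∈ A}).ncard}
      ≤ ENNReal.ofReal ((1 + (ρ-1)*p)^m) / ρ'^K := by
    rw [ENNReal.le_div_iff_mul_le (Or.inl hρK) (Or.inl hρKtop), mul_comm]
    exact le_trans (mul_le_mul_right step1 _) (le_trans step2 (le_of_eq step3 |>.trans step5))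
  refine le_trans final ?_
  have : ρ'^K = ENNReal.ofReal (ρ^K) := by
    rw [hρ', ← ENNReal.ofReal_pow (by linarith)]
  rw [this, ← ENNReal.ofReal_div_of_pos (pow_pos (by linarith) K)]

lemma chernoff_real (m : ℕ) (hm : 1 ≤ m) (K : ℕ) (hK : 1 ≤ K) (γ : ℝ)
    (hγ0 : 0 < γ) (hγ1 : γ < 1) (t : ℝ)
    (ht : t = Real.sqrt (2*K*Real.log ((m+1)/γ))) (htK : t < K) :
    (1 + ((K:ℝ)/((K:ℝ)-t) - 1) * (((K:ℝ)-t)/m))^m / ((K:ℝ)/((K:ℝ)-t))^K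
      ≤ γ/(m+1) := by
  have hm1 : (1:ℝ) ≤ m := by exact_mod_cast hm
  have hK1 : (1:ℝ) ≤ K := by exact_mod_cast hK
  set L : ℝ := Real.log ((m+1)/γ) with hL
  have hL0 : 0 < L := by
    apply Real.log_pos
    rw [lt_div_iff₀ hγ0]
    nlinarith
  have ht0 : 0 < t := by
    rw [ht]
    apply Real.sqrt_pos.mpr
    positivity
  have ht2 : t^2 = 2*K*L := by
    rw [ht, Real.sq_sqrt (by positivity)]
  have hKt : (0:ℝ) < K - t := by linarith
  set s : ℝ := t / K with hs
  have hs0 : 0 ≤ s := by positivity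
  have hs1 : s < 1 := by
    rw [hs, div_lt_one (by linarith)]; exact htK
  have key := log_one_sub hs0 hs1
  have h1s : 1 - s = ((K:ℝ)-t)/K := by
    rw [hs]; field_simp
  set ρ : ℝ := (K:ℝ)/((K:ℝ)-t) with hρ
  have hρ0 : 0 < ρ := by positivity
  have hlogρ : Real.log ρ = -Real.log (1-s) := by
    rw [h1s, hρ, ← Real.log_inv, inv_div]
  -- K * log ρ ≥ t + L
  have hmain : t + L ≤ (K:ℝ) * Real.log ρ := by
    have h2 : (K:ℝ) * (s + s^2/2) ≤ (K:ℝ) * (-Real.log (1-s)) := by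
      apply mul_le_mul_of_nonneg_left key (by linarith)
    have h3 : (K:ℝ) * s = t := by rw [hs]; field_simp
    have h4 : (K:ℝ) * (s^2/2) = L := by
      rw [hs, div_pow]
      have : (2:ℝ)*K*L = t^2 := ht2.symm
      field_simp
      nlinarith [sq_nonneg ((K:ℝ))]
    rw [hlogρ]
    nlinarith
  -- (ρ-1) * ((K-t)/m) = t/m
  have hsimp : (ρ - 1) * (((K:ℝ)-t)/m) = t/m := by
    rw [hρ]
    field_simp
    ring
  rw [hsimp]
  -- (1+t/m)^m ≤ exp t
  have hexp1 : (1 + t/m)^m ≤ Real.exp t := by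
    have h5 : 1 + t/m ≤ Real.exp (t/m) := by
      have := Real.add_one_le_exp (t/m)
      linarith
    calc (1 + t/m)^m ≤ (Real.exp (t/m))^m := by
          apply pow_le_pow_left₀ (by positivity) h5
      _ = Real.exp ((m:ℝ) * (t/m)) := by rw [← Real.exp_nat_mul]
      _ = Real.exp t := by
          congr 1; field_simp
  -- exp t ≤ (γ/(m+1)) * ρ^K
  have hexp2 : Real.exp t ≤ (γ/(m+1)) * ρ^K := by
    have h6 : Real.exp t ≤ Real.exp ((K:ℝ) * Real.log ρ - L) := by
      apply Real.exp_le_exp.mpr; linarith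
    have h7 : Real.exp ((K:ℝ) * Real.log ρ - L) = (γ/(m+1)) * ρ^K := by
      rw [Real.exp_sub]
      have h8 : Real.exp ((K:ℝ) * Real.log ρ) = ρ^K := by
        rw [Real.exp_nat_mul, Real.exp_log hρ0]
      have h9 : Real.exp L = (m+1)/γ := by
        rw [hL, Real.exp_log (by positivity)]
      rw [h8, h9]
      field_simp
    linarith
  rw [div_le_iff₀ (by positivity)]
  calc (1 + t/m)^m ≤ Real.exp t := hexp1
    _ ≤ (γ/(m+1)) * ρ^K := hexp2
    _ = γ/(m+1) * ρ^K := by ring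

/-- Let `V = (v 0, …, v (n−1))` be `n` i.i.d. samples from the uniform probability
measure `μ` on a set `X_free ⊆ ℝ^d` in which every ball of radius `r' ≥ 0` has measure
at most `r'^d · c` (where `c = ℙ(B₁^d)`). Fix `K ≥ 1` and `γ ∈ (0,1)` with
`K > √(2K·log(n/γ))`. If `r > 0` satisfies
`r^d · c ≤ (K − √(2K·log(n/γ)))/(n − 1)`, then with probability at least `1 − γ` every
sample point has fewer than `K + 1` other sample points within distance `r` (i.e.
`r < min_{v ∈ V} ‖v − nn_{K+1}(v)‖`). -/
theorem stmt9 {d : ℕ} (hd : 1 ≤ d) (Xfree : Set (EuclideanSpace ℝ (Fin d)))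
    (hXmeas : MeasurableSet Xfree)
    (μ : Measure (EuclideanSpace ℝ (Fin d))) [IsProbabilityMeasure μ]
    (hsupp : μ Xfree = 1) (c : ℝ) (hc : 0 < c)
    (hball : ∀ (x : EuclideanSpace ℝ (Fin d)) (r' : ℝ), 0 ≤ r' →
      μ (Metric.closedBall x r') ≤ ENNReal.ofReal (r' ^ d * c))
    (n K : ℕ) (hK : 1 ≤ K) (hn : 2 ≤ n) (γ : ℝ) (hγ0 : 0 < γ) (hγ1 : γ < 1)
    (hKγ : Real.sqrt (2 * K * Real.log (n / γ)) < K)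
    (r : ℝ) (hr : 0 < r)
    (hrad : r ^ d * c ≤ ((K : ℝ) - Real.sqrt (2 * K * Real.log (n / γ))) / ((n : ℝ) - 1)) :
    ENNReal.ofReal (1 - γ) ≤
      (Measure.pi fun _ : Fin n => μ)
        {v : Fin n → EuclideanSpace ℝ (Fin d) |
          ∀ i : Fin n, ({j : Fin n | j ≠ i ∧ dist (v i) (v j) ≤ r}).ncard < K + 1} := by
  classical
  obtain ⟨m, rfl⟩ : ∃ m, n = m + 1 := ⟨n - 1, by omega⟩
  have hm : 1 ≤ m := by omega
  set E := EuclideanSpace ℝ (Fin d) with hE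
  set t : ℝ := Real.sqrt (2 * K * Real.log ((m+1 : ℕ) / γ)) with htdef
  have ht0 : 0 ≤ t := Real.sqrt_nonneg _
  have htK : t < K := hKγ
  have hKt : (0:ℝ) < (K:ℝ) - t := by linarith
  have hm0 : (0:ℝ) < m := by exact_mod_cast hm
  set p : ℝ := ((K:ℝ) - t)/m with hp
  set ρ : ℝ := (K:ℝ)/((K:ℝ)-t) with hρdef
  have hp0 : 0 ≤ p := by positivity
  have hρ1 : 1 ≤ ρ := by
    rw [hρdef, le_div_iff₀ hKt]; linarith
  have hrad' : r ^ d * c ≤ p := by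
    have : ((m+1:ℕ):ℝ) - 1 = (m:ℝ) := by push_cast; ring
    rw [hp, ← this]
    exact hrad
  have hballp : ∀ x : E, μ (Metric.closedBall x r) ≤ ENNReal.ofReal p :=
    fun x => le_trans (hball x r hr.le) (ENNReal.ofReal_le_ofReal hrad')
  set P := Measure.pi fun _ : Fin (m+1) => μ with hP
  have hPprob : IsProbabilityMeasure P := by infer_instance
  -- the bad events
  set Sbad : Fin (m+1) → Set (Fin (m+1) → E) := fun i =>
    {v | K + 1 ≤ ({j : Fin (m+1) | j ≠ i ∧ dist (v i) (v j) ≤ r}).ncard} with hSbad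
  have hcard : ∀ (i : Fin (m+1)) (v : Fin (m+1) → E),
      ({j : Fin (m+1) | j ≠ i ∧ dist (v i) (v j) ≤ r}).ncard
        = ∑ j : Fin (m+1), if j ≠ i ∧ dist (v i) (v j) ≤ r then 1 else 0 := by
    intro i v
    rw [← Finset.card_filter, ← Set.ncard_coe_finset]
    congr 1
    ext j; simp
  have hmeas_cond : ∀ (i j : Fin (m+1)),
      MeasurableSet {v : Fin (m+1) → E | j ≠ i ∧ dist (v i) (v j) ≤ r} := by
    intro i j
    by_cases hij : j = i
    · have : {v : Fin (m+1) → E | j ≠ i ∧ dist (v i) (v j) ≤ r} = ∅ := by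
        ext v; simp [hij]
      rw [this]; exact MeasurableSet.empty
    · have : {v : Fin (m+1) → E | j ≠ i ∧ dist (v i) (v j) ≤ r}
          = {v : Fin (m+1) → E | dist (v i) (v j) ≤ r} := by
        ext v; simp [hij]
      rw [this]
      exact measurableSet_le ((measurable_pi_apply i).dist (measurable_pi_apply j))
        measurable_const
  have hmeas_f : ∀ i, Measurable (fun v : Fin (m+1) → E =>
      ∑ j : Fin (m+1), if j ≠ i ∧ dist (v i) (v j) ≤ r then 1 else 0) := by
    intro i
    apply Finset.measurable_sum
    intro j _
    exact Measurable.ite (hmeas_cond i j) measurable_const measurable_const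
  have hSmeas : ∀ i, MeasurableSet (Sbad i) := by
    intro i
    have : Sbad i = (fun v : Fin (m+1) → E =>
        ∑ j : Fin (m+1), if j ≠ i ∧ dist (v i) (v j) ≤ r then 1 else 0) ⁻¹' (Set.Ici (K+1)) := by
      ext v; simp only [hSbad, Set.mem_setOf_eq, Set.mem_preimage, Set.mem_Ici, hcard i v]
    rw [this]
    exact (hmeas_f i) measurableSet_Ici
  -- per-index bound
  have hbound : ∀ i, P (Sbad i) ≤ ENNReal.ofReal (γ / ((m:ℝ)+1)) := by
    intro i
    have hmp := measurePreserving_piFinSuccAbove (fun _ : Fin (m+1) => μ) i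
    set e := MeasurableEquiv.piFinSuccAbove (fun _ : Fin (m+1) => E) i with he
    set Pm := Measure.pi fun _ : Fin m => μ with hPm
    set T : Set (E × (Fin m → E)) :=
      {q | K ≤ ({j : Fin m | q.2 j ∈ Metric.closedBall q.1 r}).ncard} with hT
    have hcard2 : ∀ q : E × (Fin m → E),
        ({j : Fin m | q.2 j ∈ Metric.closedBall q.1 r}).ncard
          = ∑ j : Fin m, if q.2 j ∈ Metric.closedBall q.1 r then 1 else 0 := by
      intro q
      rw [← Finset.card_filter, ← Set.ncard_coe_finset]
      congr 1; ext j; simp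
    have hTmeas : MeasurableSet T := by
      have hTeq : T = (fun q : E × (Fin m → E) =>
          ∑ j : Fin m, if q.2 j ∈ Metric.closedBall q.1 r then 1 else 0) ⁻¹' Set.Ici K := by
        ext q
        simp only [hT, Set.mem_setOf_eq, Set.mem_preimage, Set.mem_Ici, hcard2]
      rw [hTeq]
      have hmg : Measurable (fun q : E × (Fin m → E) =>
          ∑ j : Fin m, if q.2 j ∈ Metric.closedBall q.1 r then 1 else 0) := by
        apply Finset.measurable_sum
        intro j _
        refine Measurable.ite ?_ measurable_const measurable_const
        have : {q : E × (Fin m → E) | q.2 j ∈ Metric.closedBall q.1 r}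
            = {q : E × (Fin m → E) | dist (q.2 j) q.1 ≤ r} := by
          ext q; simp [Metric.mem_closedBall]
        rw [this]
        exact measurableSet_le (((measurable_pi_apply j).comp measurable_snd).dist
          measurable_fst) measurable_const
      exact hmg measurableSet_Ici
    have hsub2 : Sbad i ⊆ e ⁻¹' T := by
      intro v hv
      simp only [hSbad, Set.mem_setOf_eq, hcard i v] at hv
      simp only [Set.mem_preimage, hT, Set.mem_setOf_eq, hcard2]
      have hsum : (∑ j : Fin (m+1), if j ≠ i ∧ dist (v i) (v j) ≤ r then 1 else 0)
          = ∑ j : Fin m, if (e v).2 j ∈ Metric.closedBall ((e v).1) r then 1 else 0 := by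
        rw [Fin.sum_univ_succAbove (fun j => if j ≠ i ∧ dist (v i) (v j) ≤ r then 1 else 0) i]
        have h1 : (e v).1 = v i := rfl
        have h2 : ∀ j, (e v).2 j = v (i.succAbove j) := fun j => rfl
        simp [h1, h2, Fin.succAbove_ne, Metric.mem_closedBall, dist_comm]
      omega
    calc P (Sbad i) ≤ P (e ⁻¹' T) := measure_mono hsub2
      _ = (μ.prod Pm) T := hmp.measure_preimage hTmeas.nullMeasurableSet
      _ = ∫⁻ x, Pm (Prod.mk x ⁻¹' T) ∂μ := Measure.prod_apply hTmeas
      _ ≤ ∫⁻ _, ENNReal.ofReal (γ/((m:ℝ)+1)) ∂μ := by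
          apply lintegral_mono
          intro x
          show Pm (Prod.mk x ⁻¹' T) ≤ ENNReal.ofReal (γ/((m:ℝ)+1))
          have hpre : Prod.mk x ⁻¹' T
              = {w : Fin m → E | K ≤ ({j | w j ∈ Metric.closedBall x r}).ncard} := rfl
          rw [hpre]
          refine le_trans
            (binom_bound μ m K _ Metric.isClosed_closedBall.measurableSet p ρ hp0 hρ1 (hballp x)) ?_
          apply ENNReal.ofReal_le_ofReal
          have hch := chernoff_real m hm K hK γ hγ0 hγ1 t (by rw [htdef]; push_cast; ring_nf) htK
          rw [hp, hρdef]
          exact hch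
      _ = ENNReal.ofReal (γ/((m:ℝ)+1)) := by
          rw [lintegral_const, measure_univ, mul_one]
  -- union bound
  have hunion : P (⋃ i, Sbad i) ≤ ENNReal.ofReal γ := by
    calc P (⋃ i, Sbad i) ≤ ∑' i, P (Sbad i) := measure_iUnion_le _
      _ ≤ ∑' _ : Fin (m+1), ENNReal.ofReal (γ/((m:ℝ)+1)) := ENNReal.tsum_le_tsum hbound
      _ = (m+1) * ENNReal.ofReal (γ/((m:ℝ)+1)) := by
          rw [tsum_fintype]
          simp [Finset.sum_const, Finset.card_univ, nsmul_eq_mul]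
      _ = ENNReal.ofReal γ := by
          have : ((m+1 : ℕ) : ℝ≥0∞) = ENNReal.ofReal ((m:ℝ)+1) := by
            rw [← ENNReal.ofReal_natCast]; congr 1; push_cast; ring
          rw [show ((m:ℕ)+1 : ℝ≥0∞) = ((m+1 : ℕ) : ℝ≥0∞) by push_cast; ring, this,
            ← ENNReal.ofReal_mul (by positivity)]
          congr 1
          field_simp
  -- conclude
  have hGoal : {v : Fin (m+1) → E |
      ∀ i : Fin (m+1), ({j : Fin (m+1) | j ≠ i ∧ dist (v i) (v j) ≤ r}).ncard < K + 1}
      = (⋃ i, Sbad i)ᶜ := by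
    ext v
    simp only [Set.mem_setOf_eq, Set.mem_compl_iff, Set.mem_iUnion, not_exists, hSbad,
      not_le]
  rw [hGoal, measure_compl (MeasurableSet.iUnion hSmeas) (measure_ne_top _ _)]
  have h1 : ENNReal.ofReal (1-γ) = 1 - ENNReal.ofReal γ := by
    rw [ENNReal.ofReal_sub 1 hγ0.le, ENNReal.ofReal_one]
  rw [measure_univ, h1]
  exact tsub_le_tsub_left hunion 1
end

section
/- The set of d-dimensional Euclidean closed balls in ℝ^d cannot shatter any set of d+2 points; equivalently, the VC dimension of the family of closed balls in ℝ^d is at most d+1. -/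
/-- The family of closed Euclidean balls in `ℝ^d` cannot shatter any set of `d + 2`
points: for every finite set `A` of `d + 2` points there is a subset of `A` that is not
of the form `A ∩ B` for any closed ball `B`. Hence the VC dimension of closed balls in
`ℝ^d` is at most `d + 1`. -/
theorem stmt15 (d : ℕ) (A : Finset (EuclideanSpace ℝ (Fin d)))
    (hA : A.card = d + 2) :
    ¬ ∀ B ⊆ (A : Set (EuclideanSpace ℝ (Fin d))),
        ∃ (c : EuclideanSpace ℝ (Fin d)) (r : ℝ),
          (A : Set (EuclideanSpace ℝ (Fin d))) ∩ Metric.closedBall c r = B := by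
  intro h
  let E := EuclideanSpace ℝ (Fin d)
  -- the inclusion of A into E is not affinely independent
  have hdep : ¬ AffineIndependent ℝ (Subtype.val : A → E) := by
    intro hind
    have h1 := hind.card_le_finrank_succ
    have h2 : Module.finrank ℝ (vectorSpan ℝ (Set.range (Subtype.val : A → E)))
        ≤ Module.finrank ℝ E := Submodule.finrank_le _
    have h3 : Module.finrank ℝ E = d := by
      simp [E, finrank_euclideanSpace]
    rw [Fintype.card_coe, hA] at h1
    omega
  obtain ⟨I, p, hpI, hpIc⟩ := Convex.radon_partition hdep
  -- realize both sides of the partition by balls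
  have hsubI : (Subtype.val '' I : Set E) ⊆ (A : Set E) := by
    rintro x ⟨a, _, rfl⟩; exact a.2
  have hsubIc : (Subtype.val '' Iᶜ : Set E) ⊆ (A : Set E) := by
    rintro x ⟨a, _, rfl⟩; exact a.2
  obtain ⟨c₁, r₁, hc₁⟩ := h _ hsubI
  obtain ⟨c₂, r₂, hc₂⟩ := h _ hsubIc
  -- the two image sets are disjoint
  have hdisj : ∀ x : E, x ∈ (Subtype.val '' I : Set E) → x ∈ (Subtype.val '' Iᶜ : Set E) → False := by
    rintro x ⟨a, haI, rfl⟩ ⟨b, hbI, hba⟩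
    exact hbI (by rwa [Subtype.val_injective hba])
  -- membership facts
  have hmemI : ∀ x ∈ (Subtype.val '' I : Set E), dist x c₁ ≤ r₁ ∧ r₂ < dist x c₂ := by
    intro x hx
    constructor
    · have : x ∈ (A : Set E) ∩ Metric.closedBall c₁ r₁ := hc₁ ▸ hx
      simpa [Metric.mem_closedBall] using this.2
    · by_contra hcon
      push_neg at hcon
      have : x ∈ (A : Set E) ∩ Metric.closedBall c₂ r₂ := ⟨hsubI hx, by simpa [Metric.mem_closedBall]⟩
      exact hdisj x hx (hc₂ ▸ this)
  have hmemIc : ∀ x ∈ (Subtype.val '' Iᶜ : Set E), dist x c₂ ≤ r₂ ∧ r₁ < dist x c₁ := by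
    intro x hx
    constructor
    · have : x ∈ (A : Set E) ∩ Metric.closedBall c₂ r₂ := hc₂ ▸ hx
      simpa [Metric.mem_closedBall] using this.2
    · by_contra hcon
      push_neg at hcon
      have : x ∈ (A : Set E) ∩ Metric.closedBall c₁ r₁ := ⟨hsubIc hx, by simpa [Metric.mem_closedBall]⟩
      exact hdisj x (hc₁ ▸ this) hx
  -- nonemptiness gives r₁, r₂ ≥ 0
  have hIne : (Subtype.val '' I : Set E).Nonempty := by
    by_contra hne
    rw [Set.not_nonempty_iff_eq_empty] at hne
    rw [hne, convexHull_empty] at hpI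
    exact hpI
  have hIcne : (Subtype.val '' Iᶜ : Set E).Nonempty := by
    by_contra hne
    rw [Set.not_nonempty_iff_eq_empty] at hne
    rw [hne, convexHull_empty] at hpIc
    exact hpIc
  obtain ⟨x₁, hx₁⟩ := hIne
  obtain ⟨x₂, hx₂⟩ := hIcne
  have hr₁ : 0 ≤ r₁ := le_trans dist_nonneg (hmemI x₁ hx₁).1
  have hr₂ : 0 ≤ r₂ := le_trans dist_nonneg (hmemIc x₂ hx₂).1
  -- the affine function separating the two hulls
  set g : E → ℝ := fun x => ‖x - c₁‖ ^ 2 - r₁ ^ 2 - (‖x - c₂‖ ^ 2 - r₂ ^ 2) with hg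
  -- g is an affine function: g x = ⟪2 • (c₂ - c₁), x⟫ + const
  have hgaff : ∀ x : E, g x =
      inner ℝ ((2 : ℝ) • (c₂ - c₁)) x + (‖c₁‖ ^ 2 - r₁ ^ 2 - ‖c₂‖ ^ 2 + r₂ ^ 2) := by
    intro x
    have e1 : ‖x - c₁‖ ^ 2 = ‖x‖ ^ 2 - 2 * inner ℝ c₁ x + ‖c₁‖ ^ 2 := by
      rw [@norm_sub_sq_real E]; ring_nf
      rw [real_inner_comm]; ring
    have e2 : ‖x - c₂‖ ^ 2 = ‖x‖ ^ 2 - 2 * inner ℝ c₂ x + ‖c₂‖ ^ 2 := by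
      rw [@norm_sub_sq_real E]; ring_nf
      rw [real_inner_comm]; ring
    simp only [hg, e1, e2, inner_smul_left, inner_sub_left, RCLike.ofReal_real_eq_id, id, starRingEnd_apply, star_trivial]
    push_cast
    ring
  -- g < 0 on the hull of I
  have hneg : ∀ y ∈ convexHull ℝ (Subtype.val '' I : Set E), g y < 0 := by
    have hconv : Convex ℝ {x : E | g x < 0} := by
      have : {x : E | g x < 0} =
          {x : E | (innerSL ℝ ((2 : ℝ) • (c₂ - c₁))) x <
            -(‖c₁‖ ^ 2 - r₁ ^ 2 - ‖c₂‖ ^ 2 + r₂ ^ 2)} := by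
        ext x
        simp only [Set.mem_setOf_eq, hgaff x, innerSL_apply_apply]
        constructor <;> intro <;> linarith
      rw [this]
      exact convex_halfSpace_lt (LinearMap.isLinear _) _
    have hsub : (Subtype.val '' I : Set E) ⊆ {x : E | g x < 0} := by
      intro x hx
      obtain ⟨h1, h2⟩ := hmemI x hx
      have d1 : ‖x - c₁‖ ^ 2 ≤ r₁ ^ 2 := by
        have := dist_eq_norm x c₁ ▸ h1
        nlinarith [norm_nonneg (x - c₁)]
      have d2 : r₂ ^ 2 < ‖x - c₂‖ ^ 2 := by
        have := dist_eq_norm x c₂ ▸ h2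
        nlinarith [norm_nonneg (x - c₂)]
      simp only [Set.mem_setOf_eq, hg]
      linarith
    intro y hy
    exact convexHull_min hsub hconv hy
  -- g > 0 on the hull of Iᶜ
  have hpos : ∀ y ∈ convexHull ℝ (Subtype.val '' Iᶜ : Set E), 0 < g y := by
    have hconv : Convex ℝ {x : E | 0 < g x} := by
      have : {x : E | 0 < g x} =
          {x : E | -(‖c₁‖ ^ 2 - r₁ ^ 2 - ‖c₂‖ ^ 2 + r₂ ^ 2) <
            (innerSL ℝ ((2 : ℝ) • (c₂ - c₁))) x} := by
        ext x
        simp only [Set.mem_setOf_eq, hgaff x, innerSL_apply_apply]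
        constructor <;> intro <;> linarith
      rw [this]
      exact convex_halfSpace_gt (LinearMap.isLinear _) _
    have hsub : (Subtype.val '' Iᶜ : Set E) ⊆ {x : E | 0 < g x} := by
      intro x hx
      obtain ⟨h1, h2⟩ := hmemIc x hx
      have d1 : ‖x - c₂‖ ^ 2 ≤ r₂ ^ 2 := by
        have := dist_eq_norm x c₂ ▸ h1
        nlinarith [norm_nonneg (x - c₂)]
      have d2 : r₁ ^ 2 < ‖x - c₁‖ ^ 2 := by
        have := dist_eq_norm x c₁ ▸ h2
        nlinarith [norm_nonneg (x - c₁)]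
      simp only [Set.mem_setOf_eq, hg]
      linarith
    intro y hy
    exact convexHull_min hsub hconv hy
  exact absurd (hneg p hpI) (not_lt.mpr (le_of_lt (hpos p hpIc)))
end
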